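/- arXiv:1707.07259 — 2 statements merged into one kernel-verified Lean document; each statement's English description precedes it below -/
import Mathlib

section
/- Let F = [[0, 1/C, 0],[(k₁-1)/L, (k₂-R)/L, k₃/L],[0, -1, 0]] with C, L, R > 0, and let P = diag(η, p, (k₃/L)·p) with η > 0. If P is positive definite and Q = FᵀP + PF is negative semidefinite with Q ≠ 0, and (k₁-1)p/L = -η/C, then k₁ < 1, k₂ < R, and k₃ > 0. -/
/-!
Positive definiteness of the diagonal `P` gives `η, p > 0` and `k₃ / L · p > 0`, hence `k₃ > 0`;
the coupling relation then forces `k₁ < 1`. With that relation the off-diagonal entries of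
`Q = FᵀP + PF` cancel, leaving `Q = diag(0, 2(k₂ - R)p/L, 0)`. Negative semidefiniteness makes the
middle entry nonpositive and `Q ≠ 0` makes it nonzero, so `k₂ < R`.
-/

open Matrix

lemma Matrix.diag_nonpos_of_forall_dotProduct_mulVec_nonpos {n R : Type*} [Fintype n]
    [DecidableEq n] [CommRing R] [PartialOrder R] {Q : Matrix n n R}
    (hQ : ∀ x : n → R, x ⬝ᵥ Q *ᵥ x ≤ 0) (i : n) : Q i i ≤ 0 := by
  simpa using hQ (Pi.single i 1)

lemma dgu_lyapunov_eq (C L R k₁ k₂ k₃ η p : ℝ) :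
    (!![0, 1/C, 0; (k₁-1)/L, (k₂-R)/L, k₃/L; 0, -1, 0])ᵀ * diagonal ![η, p, (k₃/L) * p]
        + diagonal ![η, p, (k₃/L) * p] * !![0, 1/C, 0; (k₁-1)/L, (k₂-R)/L, k₃/L; 0, -1, 0]
      = !![0, η / C + (k₁ - 1) * p / L, 0;
          η / C + (k₁ - 1) * p / L, 2 * ((k₂ - R) / L * p), 0;
          0, 0, 0] := by
  ext i j
  fin_cases i <;> fin_cases j <;> simp [Matrix.mul_apply, Fin.sum_univ_three] <;> ring

theorem stmt_4_general (C L R k₁ k₂ k₃ η p : ℝ)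
    (hC : 0 < C) (hL : 0 < L)
    (F : Matrix (Fin 3) (Fin 3) ℝ)
    (hF : F = !![0, 1/C, 0; (k₁-1)/L, (k₂-R)/L, k₃/L; 0, -1, 0])
    (P : Matrix (Fin 3) (Fin 3) ℝ)
    (hP : P = Matrix.diagonal ![η, p, (k₃/L) * p])
    (hPpos : P.PosDef)
    (Q : Matrix (Fin 3) (Fin 3) ℝ)
    (hQ : Q = Fᵀ * P + P * F)
    (hQnsd : ∀ x : Fin 3 → ℝ, x ⬝ᵥ Q *ᵥ x ≤ 0)
    (hQne : Q ≠ 0)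
    (hrel : (k₁ - 1) * p / L = -η / C) :
    k₁ < 1 ∧ k₂ < R ∧ 0 < k₃ := by
  rw [hP, posDef_diagonal_iff] at hPpos
  have hη : 0 < η := by simpa using hPpos 0
  have hp : 0 < p := by simpa using hPpos 1
  have hk₃ : 0 < k₃ :=
    (div_pos_iff_of_pos_right hL).1 ((mul_pos_iff_of_pos_right hp).1 (by simpa using hPpos 2))
  have hk₁ : k₁ < 1 := by
    have : (k₁ - 1) * p / L < 0 := hrel ▸ div_neg_of_neg_of_pos (neg_neg_of_pos hη) hC
    exact sub_neg.1 (neg_of_mul_neg_left (neg_of_div_neg_left this hL.le) hp.le)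
  have hQdiag : Q = diagonal ![0, 2 * ((k₂ - R) / L * p), 0] := by
    rw [hQ, hF, hP, dgu_lyapunov_eq, hrel, neg_div, add_neg_cancel, diagonal_vec3]
  have hmid_nonpos : 2 * ((k₂ - R) / L * p) ≤ 0 := by
    simpa [hQdiag] using diag_nonpos_of_forall_dotProduct_mulVec_nonpos hQnsd 1
  have hmid_ne : 2 * ((k₂ - R) / L * p) ≠ 0 := fun h ↦ hQne (by simp [hQdiag, h])
  have hmid_neg : (k₂ - R) / L * p < 0 := by linarith [lt_of_le_of_ne hmid_nonpos hmid_ne]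
  exact ⟨hk₁, sub_neg.1 (neg_of_div_neg_left (neg_of_mul_neg_left hmid_neg hp.le) hL.le), hk₃⟩

theorem stmt_4 (C L R k₁ k₂ k₃ η p : ℝ)
    (hC : 0 < C) (hL : 0 < L) (hR : 0 < R) (hη : 0 < η)
    (F : Matrix (Fin 3) (Fin 3) ℝ)
    (hF : F = !![0, 1/C, 0; (k₁-1)/L, (k₂-R)/L, k₃/L; 0, -1, 0])
    (P : Matrix (Fin 3) (Fin 3) ℝ)
    (hP : P = Matrix.diagonal ![η, p, (k₃/L) * p])
    (hPpos : P.PosDef)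
    (Q : Matrix (Fin 3) (Fin 3) ℝ)
    (hQ : Q = Fᵀ * P + P * F)
    (hQnsd : ∀ x : Fin 3 → ℝ, x ⬝ᵥ Q *ᵥ x ≤ 0)
    (hQne : Q ≠ 0)
    (hrel : (k₁ - 1) * p / L = -η / C) :
    k₁ < 1 ∧ k₂ < R ∧ 0 < k₃ :=
  stmt_4_general C L R k₁ k₂ k₃ η p hC hL F hF P hP hPpos Q hQ hQnsd hQne hrel
end

section
/- Let C, L, R > 0, η > 0, p > 0, k₁ < 1, k₂ < R, k₃ > 0, with p = ηL/(C(1-k₁)). Define F = [[0, 1/C, 0],[(k₁-1)/L, (k₂-R)/L, k₃/L],[0, -1, 0]] and P = diag(η, p, (k₃/L)p). Then P is positive definite and Q = FᵀP + PF equals the matrix with single nonzero entry 2(k₂-R)p/L in position (2,2), hence Q is negative semidefinite and nonzero. -/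
/-!
For a diagonal `P = diagonal d` the Lyapunov matrix `Fᵀ P + P F` has entries `F j i * d j + d i * F i j`.
With the weights `η, p, (k₃/L) p` the two off-diagonal couplings of the closed loop cancel: the
`(1,2)` one because `p (k₁ - 1)/L + η/C = 0` is exactly the relation defining `p`, the `(2,3)` one
because the third weight is `k₃/L` times the second. Only the damping term `2 (k₂ - R) p / L`
survives, on the diagonal, and it is negative.
-/

open Matrix

namespace Matrix

variable {n R : Type*} [DecidableEq n]

theorem transpose_mul_diagonal_add_diagonal_mul_apply [Fintype n] [CommSemiring R]
    (F : Matrix n n R) (d : n → R) (i j : n) :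
    (Fᵀ * diagonal d + diagonal d * F) i j = F j i * d j + d i * F i j := by
  simp [mul_diagonal, diagonal_mul]

theorem dotProduct_single_mulVec_self [Fintype n] [CommSemiring R] (x : n → R) (i : n) (a : R) :
    x ⬝ᵥ single i i a *ᵥ x = a * x i * x i := by
  rw [single_mulVec, ← Pi.single, dotProduct_single]
  ring

theorem dotProduct_single_mulVec_self_nonpos [Fintype n] [CommRing R] [LinearOrder R]
    [IsStrictOrderedRing R] {a : R} (ha : a ≤ 0) (x : n → R) (i : n) :
    x ⬝ᵥ single i i a *ᵥ x ≤ 0 := by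
  rw [dotProduct_single_mulVec_self, mul_assoc]
  exact mul_nonpos_of_nonpos_of_nonneg ha (mul_self_nonneg _)

theorem single_ne_zero [Zero R] {a : R} (ha : a ≠ 0) (i j : n) : single i j a ≠ 0 :=
  fun h => ha (by simpa using congrFun (congrFun h i) j)

end Matrix

-- `Fin 3` counts from `0`, so the paper's position `(2,2)` is `single 1 1`.
theorem cdgu_lyapunov_eq_single {C L R k₁ k₂ k₃ η p : ℝ} (hC : C ≠ 0) (hL : L ≠ 0)
    (hk₁ : 1 - k₁ ≠ 0) (hprel : p = η * L / (C * (1 - k₁))) :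
    (!![0, 1/C, 0; (k₁-1)/L, (k₂-R)/L, k₃/L; 0, -1, 0] : Matrix (Fin 3) (Fin 3) ℝ)ᵀ *
        diagonal ![η, p, (k₃/L) * p] +
      diagonal ![η, p, (k₃/L) * p] * !![0, 1/C, 0; (k₁-1)/L, (k₂-R)/L, k₃/L; 0, -1, 0] =
      single 1 1 (2 * (k₂ - R) * p / L) := by
  subst hprel
  ext i j
  rw [transpose_mul_diagonal_add_diagonal_mul_apply]
  fin_cases i <;> fin_cases j <;> simp <;> field_simp <;> ring

theorem stmt_5_general (C L R k₁ k₂ k₃ η p : ℝ)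
    (hC : 0 < C) (hL : 0 < L) (hη : 0 < η) (hp : 0 < p)
    (hk₁ : k₁ < 1) (hk₂ : k₂ < R) (hk₃ : 0 < k₃)
    (hprel : p = η * L / (C * (1 - k₁)))
    (F : Matrix (Fin 3) (Fin 3) ℝ)
    (hF : F = !![0, 1/C, 0; (k₁-1)/L, (k₂-R)/L, k₃/L; 0, -1, 0])
    (P : Matrix (Fin 3) (Fin 3) ℝ)
    (hP : P = Matrix.diagonal ![η, p, (k₃/L) * p]) :
    P.PosDef ∧
    Fᵀ * P + P * F = !![0, 0, 0; 0, 2*(k₂-R)*p/L, 0; 0, 0, 0] ∧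
    (∀ x : Fin 3 → ℝ, x ⬝ᵥ (Fᵀ * P + P * F) *ᵥ x ≤ 0) ∧
    Fᵀ * P + P * F ≠ 0 := by
  subst hF hP
  have hdamping : 2 * (k₂ - R) * p / L < 0 := div_neg_of_neg_of_pos (by nlinarith) hL
  rw [cdgu_lyapunov_eq_single hC.ne' hL.ne' (sub_pos.2 hk₁).ne' hprel]
  refine ⟨posDef_diagonal_iff.2 fun i => ?_, ?_,
    fun x => dotProduct_single_mulVec_self_nonpos hdamping.le x 1, single_ne_zero hdamping.ne 1 1⟩
  · fin_cases i <;> simp <;> positivity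
  · ext i j
    fin_cases i <;> fin_cases j <;> rfl

theorem stmt_5 (C L R k₁ k₂ k₃ η p : ℝ)
    (hC : 0 < C) (hL : 0 < L) (hR : 0 < R) (hη : 0 < η) (hp : 0 < p)
    (hk₁ : k₁ < 1) (hk₂ : k₂ < R) (hk₃ : 0 < k₃)
    (hprel : p = η * L / (C * (1 - k₁)))
    (F : Matrix (Fin 3) (Fin 3) ℝ)
    (hF : F = !![0, 1/C, 0; (k₁-1)/L, (k₂-R)/L, k₃/L; 0, -1, 0])
    (P : Matrix (Fin 3) (Fin 3) ℝ)
    (hP : P = Matrix.diagonal ![η, p, (k₃/L) * p]) :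
    P.PosDef ∧
    Fᵀ * P + P * F = !![0, 0, 0; 0, 2*(k₂-R)*p/L, 0; 0, 0, 0] ∧
    (∀ x : Fin 3 → ℝ, x ⬝ᵥ (Fᵀ * P + P * F) *ᵥ x ≤ 0) ∧
    Fᵀ * P + P * F ≠ 0 :=
  stmt_5_general C L R k₁ k₂ k₃ η p hC hL hη hp hk₁ hk₂ hk₃ hprel F hF P hP
end
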